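/- Let m be a nonnegative integer such that the Fermat number F_m = 2^(2^m) + 1 is prime, let k be an even positive integer divisible by F_m, and let r be a positive integer such that both (F_m − 1)·r + 1 and F_m·r + 1 are prime and neither of them divides k. Then n = (F_m − 1)·(F_m·r + 1)·k satisfies φ(n+k) = φ(n), where φ denotes Euler's totient function. -/

import Mathlib

/-!
Write `a = 2 ^ 2 ^ m`, so `F_m = a + 1`. Then `n + k = F_m (a r + 1) k` and `n = (F_m r + 1) a k`.
Since `F_m ∣ k` and `k` is even, the factors `F_m` and `a` contribute exactly themselves to `φ`,
while the primes `a r + 1` and `F_m r + 1` (coprime to `k`, the latter also odd) contribute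
`a r` and `F_m r`, so both totients equal `a r F_m φ(k)`.
-/

theorem Nat.totient_pow_mul_of_prime_of_dvd {p n : ℕ} (hp : p.Prime) (h : p ∣ n) (e : ℕ) :
    (p ^ e * n).totient = p ^ e * n.totient := by
  induction e with
  | zero => simp
  | succ e ih =>
    rw [pow_succ', mul_assoc, Nat.totient_mul_of_prime_of_dvd hp (h.mul_left _), ih, mul_assoc]

theorem fermat_prime_solution_even_k_dvd_general
    (m k r : ℕ) (hF : Nat.Prime (2 ^ 2 ^ m + 1))
    (hke : Even k) (hdvd : (2 ^ 2 ^ m + 1) ∣ k)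
    (hp1 : Nat.Prime (2 ^ 2 ^ m * r + 1))
    (hp2 : Nat.Prime ((2 ^ 2 ^ m + 1) * r + 1))
    (hnd1 : ¬ (2 ^ 2 ^ m * r + 1) ∣ k)
    (hnd2 : ¬ ((2 ^ 2 ^ m + 1) * r + 1) ∣ k) :
    Nat.totient (2 ^ 2 ^ m * ((2 ^ 2 ^ m + 1) * r + 1) * k + k) =
      Nat.totient (2 ^ 2 ^ m * ((2 ^ 2 ^ m + 1) * r + 1) * k) := by
  have hp2_odd : Odd ((2 ^ 2 ^ m + 1) * r + 1) :=
    hp2.odd_of_ne_two fun h ↦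
      hF.one_lt.ne' (Nat.eq_one_of_mul_eq_one_right (n := r) (by omega))
  have hp2_not_dvd : ¬ ((2 ^ 2 ^ m + 1) * r + 1) ∣ 2 ^ 2 ^ m * k := by
    rwa [(Nat.Coprime.pow_right _ (Nat.coprime_two_right.mpr hp2_odd)).dvd_mul_left]
  rw [show 2 ^ 2 ^ m * ((2 ^ 2 ^ m + 1) * r + 1) * k + k =
        (2 ^ 2 ^ m + 1) * ((2 ^ 2 ^ m * r + 1) * k) by ring,
    show 2 ^ 2 ^ m * ((2 ^ 2 ^ m + 1) * r + 1) * k =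
        ((2 ^ 2 ^ m + 1) * r + 1) * (2 ^ 2 ^ m * k) by ring,
    Nat.totient_mul_of_prime_of_dvd hF (hdvd.mul_left _),
    Nat.totient_mul_of_prime_of_not_dvd hp1 hnd1,
    Nat.totient_mul_of_prime_of_not_dvd hp2 hp2_not_dvd,
    Nat.totient_pow_mul_of_prime_of_dvd Nat.prime_two hke.two_dvd, Nat.add_sub_cancel,
    Nat.add_sub_cancel]
  ring

theorem fermat_prime_solution_even_k_dvd
    (m k r : ℕ) (hF : Nat.Prime (2 ^ 2 ^ m + 1))
    (hk : 0 < k) (hke : Even k) (hdvd : (2 ^ 2 ^ m + 1) ∣ k)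
    (hr : 0 < r)
    (hp1 : Nat.Prime (2 ^ 2 ^ m * r + 1))
    (hp2 : Nat.Prime ((2 ^ 2 ^ m + 1) * r + 1))
    (hnd1 : ¬ (2 ^ 2 ^ m * r + 1) ∣ k)
    (hnd2 : ¬ ((2 ^ 2 ^ m + 1) * r + 1) ∣ k) :
    Nat.totient (2 ^ 2 ^ m * ((2 ^ 2 ^ m + 1) * r + 1) * k + k) =
      Nat.totient (2 ^ 2 ^ m * ((2 ^ 2 ^ m + 1) * r + 1) * k) :=
  fermat_prime_solution_even_k_dvd_general m k r hF hke hdvd hp1 hp2 hnd1 hnd2
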